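/- arXiv:2310.09677 — 2 statements merged into one kernel-verified Lean document; each statement's English description precedes it below -/
import Mathlib

section
/- Let Λ be an m×n real matrix, R a p×n real matrix, S a q×m real matrix and Q a k×n real matrix. Fix ε > 0, η > 0, y ∈ ℝᵐ, and let c, d ≥ 0 be such that c RᵀR + d Λᵀ Sᵀ S Λ − QᵀQ is positive semidefinite. If f₀ ∈ ℝⁿ satisfies c RᵀR f₀ + d Λᵀ Sᵀ S (Λ f₀ − y) = 0, then for every f ∈ ℝⁿ with ‖R f‖ ≤ ε and ‖S (y − Λ f)‖ ≤ η, one has ‖Q f − Q f₀‖² ≤ c (ε² − ‖R f₀‖²) + d (η² − ‖S (y − Λ f₀)‖²). -/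
/-!
The objective `J f = c ‖R f‖² + d ‖S (y - Λ f)‖²` is quadratic and `f₀` is a critical point of
it, so `J f - J f₀` is exactly its quadratic part `c ‖R g‖² + d ‖S Λ g‖²` at `g = f - f₀`, which
dominates `‖Q g‖²` by the semidefiniteness assumption. The two constraints give
`J f ≤ c ε² + d η²`.
-/

open Matrix

/-- Euclidean norm on `Fin k → ℝ`. -/
noncomputable def eNorm {k : ℕ} (x : Fin k → ℝ) : ℝ := Real.sqrt (∑ i, x i ^ 2)

lemma eNorm_sq {N : ℕ} (x : Fin N → ℝ) : eNorm x ^ 2 = x ⬝ᵥ x := by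
  rw [eNorm, Real.sq_sqrt (by positivity)]
  simp only [dotProduct, sq]

lemma dotProduct_self_le_sq_of_eNorm_le {N : ℕ} {x : Fin N → ℝ} {r : ℝ} (h : eNorm x ≤ r) :
    x ⬝ᵥ x ≤ r ^ 2 :=
  eNorm_sq x ▸ pow_le_pow_left₀ (Real.sqrt_nonneg _) h 2

namespace Matrix

variable {ι ι₁ ι₂ κ : Type*} [Fintype ι] [Fintype ι₁] [Fintype ι₂] [Fintype κ]

lemma dotProduct_self_mulVec_add_sub {α : Type*} [CommRing α] (A : Matrix ι κ α) (b : ι → α)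
    (f₀ g : κ → α) :
    (A *ᵥ (f₀ + g) - b) ⬝ᵥ (A *ᵥ (f₀ + g) - b) =
      (A *ᵥ f₀ - b) ⬝ᵥ (A *ᵥ f₀ - b) + 2 * (g ⬝ᵥ Aᵀ *ᵥ (A *ᵥ f₀ - b)) +
        (A *ᵥ g) ⬝ᵥ (A *ᵥ g) := by
  rw [dotProduct_transpose_mulVec, mulVec_add, add_sub_right_comm]
  simp only [add_dotProduct, dotProduct_add, dotProduct_comm (A *ᵥ g) (A *ᵥ f₀ - b)]
  ring

lemma PosSemidef.dotProduct_mulVec_self_le {Q : Matrix ι κ ℝ} {A₁ : Matrix ι₁ κ ℝ}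
    {A₂ : Matrix ι₂ κ ℝ} {c d : ℝ} (h : (c • (A₁ᵀ * A₁) + d • (A₂ᵀ * A₂) - Qᵀ * Q).PosSemidef)
    (g : κ → ℝ) :
    (Q *ᵥ g) ⬝ᵥ (Q *ᵥ g) ≤
      c * ((A₁ *ᵥ g) ⬝ᵥ (A₁ *ᵥ g)) + d * ((A₂ *ᵥ g) ⬝ᵥ (A₂ *ᵥ g)) := by
  have := h.dotProduct_mulVec_nonneg g
  simp only [star_trivial, sub_mulVec, add_mulVec, smul_mulVec, ← mulVec_mulVec,
    dotProduct_sub, dotProduct_add, dotProduct_smul, smul_eq_mul,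
    dotProduct_transpose_mulVec] at this
  linarith

theorem PosSemidef.dotProduct_mulVec_sub_le_of_stationary {Q : Matrix ι κ ℝ}
    {A₁ : Matrix ι₁ κ ℝ} {A₂ : Matrix ι₂ κ ℝ} {b₁ : ι₁ → ℝ} {b₂ : ι₂ → ℝ} {c d : ℝ}
    {f₀ : κ → ℝ} (hpsd : (c • (A₁ᵀ * A₁) + d • (A₂ᵀ * A₂) - Qᵀ * Q).PosSemidef)
    (hstat : c • (A₁ᵀ *ᵥ (A₁ *ᵥ f₀ - b₁)) + d • (A₂ᵀ *ᵥ (A₂ *ᵥ f₀ - b₂)) = 0) (f : κ → ℝ) :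
    (Q *ᵥ (f - f₀)) ⬝ᵥ (Q *ᵥ (f - f₀)) ≤
      c * ((A₁ *ᵥ f - b₁) ⬝ᵥ (A₁ *ᵥ f - b₁) - (A₁ *ᵥ f₀ - b₁) ⬝ᵥ (A₁ *ᵥ f₀ - b₁)) +
        d * ((A₂ *ᵥ f - b₂) ⬝ᵥ (A₂ *ᵥ f - b₂) - (A₂ *ᵥ f₀ - b₂) ⬝ᵥ (A₂ *ᵥ f₀ - b₂)) := by
  obtain ⟨g, rfl⟩ : ∃ g, f = f₀ + g := ⟨f - f₀, by abel⟩
  have hfirst_order :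
      c * (g ⬝ᵥ A₁ᵀ *ᵥ (A₁ *ᵥ f₀ - b₁)) + d * (g ⬝ᵥ A₂ᵀ *ᵥ (A₂ *ᵥ f₀ - b₂)) = 0 := by
    simpa only [dotProduct_add, dotProduct_smul, smul_eq_mul, dotProduct_zero]
      using congrArg (g ⬝ᵥ ·) hstat
  rw [add_sub_cancel_left, dotProduct_self_mulVec_add_sub, dotProduct_self_mulVec_add_sub]
  linarith [hpsd.dotProduct_mulVec_self_le g]

end Matrix

theorem pointwise_S_procedure_bound_general {m n p q k : ℕ}
    (Λ : Matrix (Fin m) (Fin n) ℝ) (R : Matrix (Fin p) (Fin n) ℝ)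
    (S : Matrix (Fin q) (Fin m) ℝ) (Q : Matrix (Fin k) (Fin n) ℝ)
    (ε η : ℝ) (y : Fin m → ℝ)
    (c d : ℝ) (hc : 0 ≤ c) (hd : 0 ≤ d)
    (hfeas : (c • (Rᵀ * R) + d • (Λᵀ * Sᵀ * S * Λ) - Qᵀ * Q).PosSemidef)
    (f₀ : Fin n → ℝ)
    (hf₀ : c • ((Rᵀ * R) *ᵥ f₀) + d • ((Λᵀ * Sᵀ * S) *ᵥ (Λ *ᵥ f₀ - y)) = 0) :
    ∀ f : Fin n → ℝ, eNorm (R *ᵥ f) ≤ ε → eNorm (S *ᵥ (y - Λ *ᵥ f)) ≤ η →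
      eNorm (Q *ᵥ f - Q *ᵥ f₀) ^ 2 ≤
        c * (ε ^ 2 - eNorm (R *ᵥ f₀) ^ 2) +
          d * (η ^ 2 - eNorm (S *ᵥ (y - Λ *ᵥ f₀)) ^ 2) := by
  intro f hRf hSf
  have hgram : Λᵀ * Sᵀ * S * Λ = (S * Λ)ᵀ * (S * Λ) := by
    simp only [transpose_mul, Matrix.mul_assoc]
  have hresidual (x : Fin n → ℝ) : S *ᵥ (y - Λ *ᵥ x) = -((S * Λ) *ᵥ x - S *ᵥ y) := by
    rw [← mulVec_mulVec, mulVec_sub, neg_sub]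
  have hstat : c • (Rᵀ *ᵥ (R *ᵥ f₀ - 0)) + d • ((S * Λ)ᵀ *ᵥ ((S * Λ) *ᵥ f₀ - S *ᵥ y)) = 0 := by
    simpa only [sub_zero, transpose_mul, ← mulVec_mulVec, mulVec_sub] using hf₀
  have hbound := (hgram ▸ hfeas).dotProduct_mulVec_sub_le_of_stationary hstat f
  have hRf' := dotProduct_self_le_sq_of_eNorm_le hRf
  have hSf' := dotProduct_self_le_sq_of_eNorm_le hSf
  rw [hresidual, neg_dotProduct_neg] at hSf'
  rw [← mulVec_sub, eNorm_sq, eNorm_sq, eNorm_sq, hresidual, neg_dotProduct_neg]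
  simp only [sub_zero] at hbound
  linarith [mul_le_mul_of_nonneg_left hRf' hc, mul_le_mul_of_nonneg_left hSf' hd]

theorem pointwise_S_procedure_bound {m n p q k : ℕ}
    (Λ : Matrix (Fin m) (Fin n) ℝ) (R : Matrix (Fin p) (Fin n) ℝ)
    (S : Matrix (Fin q) (Fin m) ℝ) (Q : Matrix (Fin k) (Fin n) ℝ)
    (ε η : ℝ) (hε : 0 < ε) (hη : 0 < η) (y : Fin m → ℝ)
    (c d : ℝ) (hc : 0 ≤ c) (hd : 0 ≤ d)
    (hfeas : (c • (Rᵀ * R) + d • (Λᵀ * Sᵀ * S * Λ) - Qᵀ * Q).PosSemidef)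
    (f₀ : Fin n → ℝ)
    (hf₀ : c • ((Rᵀ * R) *ᵥ f₀) + d • ((Λᵀ * Sᵀ * S) *ᵥ (Λ *ᵥ f₀ - y)) = 0) :
    ∀ f : Fin n → ℝ, eNorm (R *ᵥ f) ≤ ε → eNorm (S *ᵥ (y - Λ *ᵥ f)) ≤ η →
      eNorm (Q *ᵥ f - Q *ᵥ f₀) ^ 2 ≤
        c * (ε ^ 2 - eNorm (R *ᵥ f₀) ^ 2) +
          d * (η ^ 2 - eNorm (S *ᵥ (y - Λ *ᵥ f₀)) ^ 2) :=
  pointwise_S_procedure_bound_general Λ R S Q ε η y c d hc hd hfeas f₀ hf₀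
end

section
/- Let P be an n×n real symmetric matrix with P² = P and let Λ be an m×n real matrix with Λ Λᵀ = I_m. Then for every y ∈ ℝᵐ, min{‖P f‖ : f ∈ ℝⁿ, Λ f = y} = min{‖Λ f − y‖ : f ∈ ℝⁿ, P f = 0}, where both minima are over nonempty sets (the first because Λ is surjective). -/
/-!
Both `Λ` and `P` are partial isometries (`T Tᴴ T = T`). For a partial isometry `T`, `‖T x‖` is
the distance from `x` to `ker T`, attained at `x - Tᴴ T x`, and `T` is isometric on `(ker T)ᗮ`.
With `f₀ = Λᵀ y`, the first minimum is therefore the distance from the affine space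
`f₀ + ker Λ` to `ker P`, and the second is the distance from `ker P` to `f₀ + ker Λ`: both equal
the distance from `f₀` to `ker Λ ⊔ ker P`.
-/

open Matrix

open LinearMap Submodule WithLp

variable {𝕜 E F G : Type*} [RCLike 𝕜] [NormedAddCommGroup E] [InnerProductSpace 𝕜 E]

theorem Submodule.norm_sub_starProjection_le (U : Submodule 𝕜 E) [U.HasOrthogonalProjection]
    (y : E) {w : E} (hw : w ∈ U) : ‖y - U.starProjection y‖ ≤ ‖y - w‖ := by
  rw [starProjection_minimal]
  exact ciInf_le (f := fun x : U => ‖y - x‖) ⟨0, Set.forall_mem_range.mpr fun _ => norm_nonneg _⟩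
    ⟨w, hw⟩

variable [FiniteDimensional 𝕜 E]
  [NormedAddCommGroup F] [InnerProductSpace 𝕜 F] [FiniteDimensional 𝕜 F]

def LinearMap.IsPartialIsometry (T : E →ₗ[𝕜] F) : Prop :=
  T ∘ₗ T.adjoint ∘ₗ T = T

namespace LinearMap.IsPartialIsometry

variable {T : E →ₗ[𝕜] F}

theorem apply_adjoint_apply (hT : T.IsPartialIsometry) (x : E) : T (T.adjoint (T x)) = T x :=
  LinearMap.congr_fun hT x

theorem norm_adjoint_apply (hT : T.IsPartialIsometry) (x : E) : ‖T.adjoint (T x)‖ = ‖T x‖ := by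
  rw [← sq_eq_sq₀ (norm_nonneg _) (norm_nonneg _), @norm_sq_eq_re_inner 𝕜,
    @norm_sq_eq_re_inner 𝕜, adjoint_inner_left, hT.apply_adjoint_apply]

theorem sub_adjoint_apply_mem_ker (hT : T.IsPartialIsometry) (x : E) :
    x - T.adjoint (T x) ∈ ker T := by
  rw [mem_ker, map_sub, hT.apply_adjoint_apply, sub_self]

theorem exists_mem_ker_norm_apply_eq (hT : T.IsPartialIsometry) (x : E) :
    ∃ k ∈ ker T, ‖T x‖ = ‖x - k‖ :=
  ⟨_, hT.sub_adjoint_apply_mem_ker x, by rw [sub_sub_cancel, hT.norm_adjoint_apply]⟩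

theorem adjoint_apply_eq_self (hT : T.IsPartialIsometry) {x : E} (hx : x ∈ (ker T)ᗮ) :
    T.adjoint (T x) = x := by
  have hk := hT.sub_adjoint_apply_mem_ker x
  have hzero : inner 𝕜 (x - T.adjoint (T x)) (x - T.adjoint (T x)) = 0 := by
    rw [inner_sub_right, inner_right_of_mem_orthogonal hk hx, adjoint_inner_right,
      mem_ker.mp hk, inner_zero_left, sub_zero]
  exact (sub_eq_zero.mp (inner_self_eq_zero.mp hzero)).symm

theorem norm_apply_eq_norm (hT : T.IsPartialIsometry) {x : E} (hx : x ∈ (ker T)ᗮ) :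
    ‖T x‖ = ‖x‖ := by
  rw [← hT.norm_adjoint_apply, hT.adjoint_apply_eq_self hx]

theorem isLeast_norm_sub_on_fiber [AddCommGroup G] [Module 𝕜 G] (A : E →ₗ[𝕜] G)
    (hT : T.IsPartialIsometry) (f₀ g₀ : E) :
    IsLeast {r | ∃ f, A f = A f₀ ∧ r = ‖T f - T g₀‖}
      ‖(f₀ - g₀) - (ker A ⊔ ker T).starProjection (f₀ - g₀)‖ := by
  set W := ker A ⊔ ker T
  set x := f₀ - g₀ with hx
  set d := x - W.starProjection x with hd
  have hdT : d ∈ (ker T)ᗮ :=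
    Submodule.orthogonal_le le_sup_right (W.sub_starProjection_mem_orthogonal x)
  constructor
  · obtain ⟨k, hk, w, hw, hkw⟩ := mem_sup.mp (W.starProjection_apply_mem x)
    refine ⟨f₀ - k, by rw [map_sub, mem_ker.mp hk, sub_zero], ?_⟩
    have hsplit : f₀ - k - g₀ = d + w := by rw [hd, ← hkw, hx]; abel
    rw [← map_sub, hsplit, map_add, mem_ker.mp hw, add_zero, hT.norm_apply_eq_norm hdT]
  · rintro r ⟨f, hf, rfl⟩
    obtain ⟨k, hk, hnorm⟩ := hT.exists_mem_ker_norm_apply_eq (f - g₀)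
    have hmem : (f₀ - f) + k ∈ W :=
      add_mem (mem_sup_left (by rw [mem_ker, map_sub, hf, sub_self])) (mem_sup_right hk)
    rw [← map_sub, hnorm]
    calc ‖x - W.starProjection x‖ ≤ ‖x - ((f₀ - f) + k)‖ := W.norm_sub_starProjection_le x hmem
      _ = ‖f - g₀ - k‖ := by rw [hx]; congr 1; abel

theorem exists_isLeast_norm_on_fiber_and_ker [NormedAddCommGroup G] [InnerProductSpace 𝕜 G]
    [FiniteDimensional 𝕜 G] {A : E →ₗ[𝕜] F} {B : E →ₗ[𝕜] G} (hA : A.IsPartialIsometry)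
    (hB : B.IsPartialIsometry) (f₀ : E) :
    ∃ δ, IsLeast {r | ∃ f, A f = A f₀ ∧ r = ‖B f‖} δ ∧
      IsLeast {r | ∃ f, B f = 0 ∧ r = ‖A f - A f₀‖} δ := by
  have h₁ := hB.isLeast_norm_sub_on_fiber A f₀ 0
  have h₂ := hA.isLeast_norm_sub_on_fiber B 0 f₀
  simp only [map_zero, sub_zero] at h₁ h₂
  simp only [sup_comm (ker B), zero_sub, map_neg, sub_neg_eq_add, neg_add_eq_sub] at h₂
  rw [norm_sub_rev] at h₂
  exact ⟨_, h₁, h₂⟩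

end LinearMap.IsPartialIsometry

theorem Matrix.isPartialIsometry_toEuclideanLin {m n : Type*} [Fintype m] [DecidableEq m]
    [Fintype n] [DecidableEq n] {M : Matrix m n 𝕜} (h : M * Mᴴ * M = M) :
    (toEuclideanLin M).IsPartialIsometry := by
  rw [IsPartialIsometry, ← toEuclideanLin_conjTranspose_eq_adjoint, ← toLpLin_mul,
    ← toLpLin_mul, ← Matrix.mul_assoc, h]

theorem eNorm_eq_norm {k : ℕ} (x : Fin k → ℝ) : eNorm x = ‖toLp 2 x‖ := by
  simp [eNorm, EuclideanSpace.norm_eq]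

theorem min_characterizations_agree {n m : ℕ}
    (P : Matrix (Fin n) (Fin n) ℝ) (Λ : Matrix (Fin m) (Fin n) ℝ)
    (hPsymm : P.IsSymm) (hPproj : P * P = P) (hΛ : Λ * Λᵀ = 1) :
    ∀ y : Fin m → ℝ,
      {r : ℝ | ∃ f : Fin n → ℝ, Λ *ᵥ f = y ∧ r = eNorm (P *ᵥ f)}.Nonempty ∧
      {r : ℝ | ∃ f : Fin n → ℝ, P *ᵥ f = 0 ∧ r = eNorm (Λ *ᵥ f - y)}.Nonempty ∧
      ∃ δ : ℝ,
        IsLeast {r : ℝ | ∃ f : Fin n → ℝ, Λ *ᵥ f = y ∧ r = eNorm (P *ᵥ f)} δ ∧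
        IsLeast {r : ℝ | ∃ f : Fin n → ℝ, P *ᵥ f = 0 ∧ r = eNorm (Λ *ᵥ f - y)} δ := by
  intro y
  set A := toEuclideanLin Λ
  set B := toEuclideanLin P
  have hA : A.IsPartialIsometry := isPartialIsometry_toEuclideanLin <| by
    rw [conjTranspose_eq_transpose_of_trivial, hΛ, Matrix.one_mul]
  have hB : B.IsPartialIsometry := isPartialIsometry_toEuclideanLin <| by
    rw [conjTranspose_eq_transpose_of_trivial, hPsymm.eq, hPproj, hPproj]
  set f₀ : EuclideanSpace ℝ (Fin n) := toLp 2 (Λᵀ *ᵥ y)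
  have hf₀ : A f₀ = toLp 2 y := by simp [A, f₀, toLpLin_apply, mulVec_mulVec, hΛ]
  have h₁ : {r : ℝ | ∃ f : Fin n → ℝ, Λ *ᵥ f = y ∧ r = eNorm (P *ᵥ f)} =
      {r | ∃ f, A f = A f₀ ∧ r = ‖B f‖} := by
    ext r
    simp [(toLp_surjective 2).exists, hf₀, A, B, eNorm_eq_norm, toLpLin_apply]
  have h₂ : {r : ℝ | ∃ f : Fin n → ℝ, P *ᵥ f = 0 ∧ r = eNorm (Λ *ᵥ f - y)} =
      {r | ∃ f, B f = 0 ∧ r = ‖A f - A f₀‖} := by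
    ext r
    simp [(toLp_surjective 2).exists, hf₀, A, B, eNorm_eq_norm, toLpLin_apply]
  obtain ⟨δ, hδ₁, hδ₂⟩ := hA.exists_isLeast_norm_on_fiber_and_ker hB f₀
  rw [h₁, h₂]
  exact ⟨hδ₁.nonempty, hδ₂.nonempty, δ, hδ₁, hδ₂⟩
end
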